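/- arXiv:2405.04313 — 3 statements merged into one kernel-verified Lean document; each statement's English description precedes it below -/
import Mathlib

section
/- Let n ≥ 1, let μ : Finset (Fin n) → ℝ satisfy μ(∅) = 0, and let m be its Möbius transform. Let x : Fin n → ℝ with x_i ≥ 0 for all i, and let σ be any permutation of Fin n sorting x nondecreasingly. Then the Choquet sum satisfies S(μ, x, σ) = Σ_{T ⊆ Fin n, T ≠ ∅} m(T)·min_{i ∈ T} x_i. -/
/-- The Choquet sum of a nonnegative vector `x` with respect to a set function `μ`
along a permutation `σ` sorting `x` nondecreasingly:
`S(μ, x, σ) = ∑_{i=0}^{n-1} (x (σ i) − x (σ (i−1))) · μ {j : x (σ i) ≤ x j}`,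
with the convention `x (σ (−1)) = 0`. -/
noncomputable def choquetSum {n : ℕ} (μ : Finset (Fin n) → ℝ) (x : Fin n → ℝ)
    (σ : Equiv.Perm (Fin n)) : ℝ :=
  ∑ i : Fin n,
    (x (σ i) -
        (if h : (i : ℕ) = 0 then 0
          else x (σ ⟨(i : ℕ) - 1, by have := i.isLt; omega⟩))) *
      μ (Finset.univ.filter (fun j => x (σ i) ≤ x j))

private lemma tele_aux (g : ℕ → ℝ) (K : ℕ) :
    ∑ i ∈ Finset.range (K + 1), (g i - if i = 0 then 0 else g (i - 1)) = g K := by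
  induction K with
  | zero => simp
  | succ k ih =>
    rw [Finset.sum_range_succ, ih]
    simp

/-- Möbius form of the Choquet sum: if `m` is the Möbius transform of `μ`
(`μ T = ∑_{S ⊆ T} m S`), then the Choquet sum equals
`∑_{∅ ≠ T ⊆ Fin n} m T · min_{i ∈ T} x i`. -/
theorem choquetSum_eq_mobius_min {n : ℕ} (hn : 1 ≤ n)
    (μ : Finset (Fin n) → ℝ) (hμ0 : μ ∅ = 0)
    (m : Finset (Fin n) → ℝ)
    (hm : ∀ T : Finset (Fin n), μ T = ∑ S ∈ T.powerset, m S)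
    (x : Fin n → ℝ) (hx : ∀ i, 0 ≤ x i)
    (σ : Equiv.Perm (Fin n)) (hσ : Monotone fun i => x (σ i)) :
    choquetSum μ x σ =
      ∑ T ∈ Finset.univ.powerset,
        if h : T.Nonempty then m T * T.inf' h x else 0 := by
  classical
  have hm0 : m ∅ = 0 := by
    have := hm ∅
    simpa [hμ0] using this.symm
  set A : Fin n → Finset (Fin n) :=
    fun i => Finset.univ.filter (fun j => x (σ i) ≤ x j) with hA
  set d : Fin n → ℝ := fun i =>
    x (σ i) - (if h : (i : ℕ) = 0 then 0
      else x (σ ⟨(i : ℕ) - 1, by have := i.isLt; omega⟩)) with hd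
  set g : ℕ → ℝ := fun k => if h : k < n then x (σ ⟨k, h⟩) else 0 with hg
  have hgi : ∀ i : Fin n, g (i : ℕ) = x (σ i) := by
    intro i
    simp only [hg]
    rw [dif_pos i.isLt]
  have hdF : ∀ i : Fin n, d i = g (i : ℕ) - if (i : ℕ) = 0 then 0 else g ((i : ℕ) - 1) := by
    intro i
    simp only [hd]
    rw [hgi i]
    congr 1
    by_cases h0 : (i : ℕ) = 0
    · rw [dif_pos h0, if_pos h0]
    · rw [dif_neg h0, if_neg h0]
      have h1 : (i : ℕ) - 1 < n := by have := i.isLt; omega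
      simp only [hg]
      rw [dif_pos h1]
  have key : choquetSum μ x σ =
      ∑ T ∈ Finset.univ.powerset,
        m T * ∑ i ∈ Finset.univ.filter (fun i => T ⊆ A i), d i := by
    unfold choquetSum
    have step1 : ∀ i : Fin n, d i * μ (A i) =
        ∑ T ∈ Finset.univ.powerset, if T ⊆ A i then d i * m T else 0 := by
      intro i
      rw [hm (A i), Finset.mul_sum]
      have hpow : (A i).powerset = Finset.univ.powerset.filter (fun S => S ⊆ A i) := by
        ext S
        simp [Finset.mem_powerset, Finset.mem_filter]
      rw [hpow, Finset.sum_filter]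
    calc ∑ i : Fin n, d i * μ (A i)
        = ∑ i : Fin n, ∑ T ∈ Finset.univ.powerset,
            (if T ⊆ A i then d i * m T else 0) := by
          exact Finset.sum_congr rfl (fun i _ => step1 i)
      _ = ∑ T ∈ Finset.univ.powerset, ∑ i : Fin n,
            (if T ⊆ A i then d i * m T else 0) := Finset.sum_comm
      _ = ∑ T ∈ Finset.univ.powerset,
            m T * ∑ i ∈ Finset.univ.filter (fun i => T ⊆ A i), d i := by
          refine Finset.sum_congr rfl (fun T _ => ?_)
          rw [Finset.mul_sum, ← Finset.sum_filter]
          exact Finset.sum_congr rfl (fun i _ => by ring)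
  rw [key]
  refine Finset.sum_congr rfl (fun T hT => ?_)
  rcases Finset.eq_empty_or_nonempty T with hTe | hTne
  · subst hTe
    simp [hm0]
  · rw [dif_pos hTne]
    congr 1
    -- inner sum equals inf'
    obtain ⟨j0, hj0T, hj0⟩ := T.exists_mem_eq_inf' hTne x
    set c := x j0 with hc
    have hfilt : Finset.univ.filter (fun i => T ⊆ A i)
        = Finset.univ.filter (fun i => x (σ i) ≤ c) := by
      ext i
      simp only [Finset.mem_filter, Finset.mem_univ, true_and]
      constructor
      · intro hsub
        have := hsub hj0T
        simp only [hA, Finset.mem_filter, Finset.mem_univ, true_and] at this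
        exact this
      · intro hle j hj
        simp only [hA, Finset.mem_filter, Finset.mem_univ, true_and]
        exact le_trans hle (hj0 ▸ Finset.inf'_le x hj)
    rw [hfilt]
    have hne : (Finset.univ.filter (fun i => x (σ i) ≤ c)).Nonempty := by
      refine ⟨σ.symm j0, ?_⟩
      simp [hc]
    set K := (Finset.univ.filter (fun i => x (σ i) ≤ c)).max' hne with hK
    have hKmem := Finset.max'_mem _ hne
    have hKle : x (σ K) ≤ c := by
      have := Finset.mem_filter.1 hKmem
      exact this.2
    have hKge : c ≤ x (σ K) := by
      have hmem : σ.symm j0 ∈ Finset.univ.filter (fun i => x (σ i) ≤ c) := by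
        simp [hc]
      have hle : σ.symm j0 ≤ K := Finset.le_max' _ _ hmem
      have := hσ hle
      simpa using this
    have hKc : x (σ K) = c := le_antisymm hKle hKge
    have hfilt2 : Finset.univ.filter (fun i => x (σ i) ≤ c)
        = Finset.univ.filter (fun i => i ≤ K) := by
      ext i
      simp only [Finset.mem_filter, Finset.mem_univ, true_and]
      constructor
      · intro hle
        exact Finset.le_max' _ _ (by simp [hle])
      · intro hle
        exact le_trans (hσ hle) hKle
    rw [hfilt2]
    set F : ℕ → ℝ := fun k =>
      if k ≤ (K : ℕ) then g k - (if k = 0 then 0 else g (k - 1)) else 0 with hF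
    calc ∑ i ∈ Finset.univ.filter (fun i => i ≤ K), d i
        = ∑ i : Fin n, F (i : ℕ) := by
          rw [Finset.sum_filter]
          refine Finset.sum_congr rfl (fun i _ => ?_)
          by_cases h : i ≤ K
          · rw [if_pos h, hdF i]
            simp only [hF]
            rw [if_pos (Fin.le_def.mp h)]
          · rw [if_neg h]
            simp only [hF]
            rw [if_neg (fun hc' => h (Fin.le_def.mpr hc'))]
      _ = ∑ k ∈ Finset.range n, F k := Fin.sum_univ_eq_sum_range F n
      _ = ∑ k ∈ Finset.range ((K : ℕ) + 1), F k := by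
          refine (Finset.sum_subset ?_ ?_).symm
          · intro k hk
            simp only [Finset.mem_range] at hk ⊢
            have := K.isLt
            omega
          · intro k hk hk'
            simp only [Finset.mem_range] at hk hk'
            simp only [hF]
            rw [if_neg (by omega)]
      _ = ∑ k ∈ Finset.range ((K : ℕ) + 1),
            (g k - if k = 0 then 0 else g (k - 1)) := by
          refine Finset.sum_congr rfl (fun k hk => ?_)
          simp only [Finset.mem_range] at hk
          simp only [hF]
          rw [if_pos (by omega)]
      _ = g (K : ℕ) := tele_aux g (K : ℕ)
      _ = x (σ K) := by
          simp only [hg]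
          rw [dif_pos K.isLt]
      _ = T.inf' hTne x := by rw [hKc, hc, hj0]
end

section
/- Let n ≥ 1, let μ : Finset (Fin n) → ℝ satisfy μ(∅) = 0, and let m be its Möbius transform. Assume μ is 2-additive, i.e., m(T) = 0 for all T with |T| ≥ 3. Let x : Fin n → ℝ with x_i ≥ 0 for all i, and let σ be any permutation of Fin n sorting x nondecreasingly. Then the Choquet sum satisfies S(μ, x, σ) = Σ_i m({i})·x_i + Σ_{i<j} m({i,j})·min(x_i, x_j). -/
/-!
The Choquet sum is linear in `μ`, and by Möbius inversion `μ` is the `m`-weighted sum of the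
unanimity games `u_S T = [S ⊆ T]`. Along the sorted order, `S` lies in the level set
`{j | x (σ i) ≤ x j}` exactly for an initial segment of positions `i`, so the Choquet sum of
`u_S` telescopes to `min_{i ∈ S} x i`. By 2-additivity only singletons and pairs remain.
-/

open Finset

theorem sum_sub_lag_mul_ite_le {n : ℕ} (f : Fin n → ℝ) (k : Fin n) :
    ∑ i : Fin n, (f i - (if h : (i : ℕ) = 0 then 0 else f ⟨(i : ℕ) - 1, by omega⟩)) *
      (if i ≤ k then 1 else 0) = f k := by
  -- `f` shifted one step right and padded by `0`, so that the sum telescopes over `ℕ`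
  let G : ℕ → ℝ := fun j => if h : 0 < j ∧ j ≤ n then f ⟨j - 1, by omega⟩ else 0
  have hG_succ (i : Fin n) : G (i + 1) = f i := by
    simp [G, i.isLt]
  have hG_lag (i : Fin n) :
      G i = if h : (i : ℕ) = 0 then 0 else f ⟨(i : ℕ) - 1, by omega⟩ := by
    by_cases h : (i : ℕ) = 0 <;> simp [G, h, i.isLt.le, Nat.pos_of_ne_zero]
  calc _ = ∑ j ∈ range n, if j ≤ k then G (j + 1) - G j else 0 := by
          rw [← Fin.sum_univ_eq_sum_range (fun j => if j ≤ k then G (j + 1) - G j else 0)]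
          refine sum_congr rfl fun i _ => ?_
          simp only [hG_succ, ← hG_lag, Fin.val_fin_le, mul_ite, mul_one, mul_zero]
    _ = ∑ j ∈ range (k + 1), (G (j + 1) - G j) := by
          rw [← sum_filter]
          congr 1
          ext j
          simp only [mem_filter, mem_range]
          omega
    _ = f k := by rw [sum_range_sub, hG_succ]; simp [G]

def unanimityGame {α : Type*} [DecidableEq α] (S T : Finset α) : ℝ :=
  if S ⊆ T then 1 else 0

theorem sum_powerset_eq_sum_mul_unanimityGame {α : Type*} [Fintype α] [DecidableEq α]
    (m : Finset α → ℝ) (T : Finset α) :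
    ∑ S ∈ T.powerset, m S = ∑ S, m S * unanimityGame S T := by
  simp only [unanimityGame, mul_ite, mul_one, mul_zero, ← sum_filter]
  congr 1
  ext S
  simp

theorem choquetSum_sum_mul {n : ℕ} {ι : Type*} (s : Finset ι) (c : ι → ℝ)
    (ν : ι → Finset (Fin n) → ℝ) (x : Fin n → ℝ) (σ : Equiv.Perm (Fin n)) :
    choquetSum (fun T => ∑ a ∈ s, c a * ν a T) x σ =
      ∑ a ∈ s, c a * choquetSum (ν a) x σ := by
  simp only [choquetSum, mul_sum]
  rw [sum_comm]
  exact sum_congr rfl fun _ _ => sum_congr rfl fun _ _ => by ring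

theorem choquetSum_unanimityGame {n : ℕ} (x : Fin n → ℝ) (σ : Equiv.Perm (Fin n))
    (hσ : Monotone fun i => x (σ i)) {S : Finset (Fin n)} (hS : S.Nonempty) :
    choquetSum (unanimityGame S) x σ = S.inf' hS x := by
  obtain ⟨j, -, hj⟩ := S.exists_mem_eq_inf' hS x
  set c := S.inf' hS x
  have hne : (univ.filter fun i => x (σ i) ≤ c).Nonempty := ⟨σ.symm j, by simp [hj]⟩
  -- the last sorted position whose value does not exceed `min_S x`
  set k := (univ.filter fun i => x (σ i) ≤ c).max' hne
  have hxk : x (σ k) ≤ c := (mem_filter.1 (max'_mem _ hne)).2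
  have hsub_iff (i : Fin n) : S ⊆ univ.filter (fun j => x (σ i) ≤ x j) ↔ i ≤ k := by
    constructor
    · intro h
      exact le_max' _ _ (by simpa [c, le_inf'_iff, subset_iff] using h)
    · intro hi a ha
      simpa using (hσ hi).trans (hxk.trans (inf'_le x ha))
  have hkc : x (σ k) = c := by
    refine le_antisymm hxk ?_
    simpa [hj] using hσ (le_max' _ (σ.symm j) (by simp [hj]))
  simp only [choquetSum, unanimityGame, hsub_iff]
  rw [sum_sub_lag_mul_ite_le (fun i => x (σ i)) k, hkc]

theorem sum_filter_card_eq_one {α β : Type*} [Fintype α] [DecidableEq α] [AddCommMonoid β]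
    (g : Finset α → β) : ∑ S with S.card = 1, g S = ∑ i, g {i} := by
  rw [← powerset_univ, ← powersetCard_eq_filter, powersetCard_one, sum_map]
  rfl

theorem sum_filter_card_eq_two {α β : Type*} [Fintype α] [LinearOrder α] [AddCommMonoid β]
    (g : Finset α → β) :
    ∑ S with S.card = 2, g S = ∑ p : α × α with p.1 < p.2, g {p.1, p.2} := by
  have hinj : Set.InjOn (fun p : α × α => ({p.1, p.2} : Finset α)) {p | p.1 < p.2} := by
    rintro ⟨a, b⟩ hab ⟨c, d⟩ hcd h
    have h' : ({a, b} : Set α) = {c, d} := by simpa using congrArg ((↑) : Finset α → Set α) h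
    rcases Set.pair_eq_pair_iff.1 h' with ⟨rfl, rfl⟩ | ⟨rfl, rfl⟩
    · rfl
    · exact absurd (hab.trans hcd) (lt_irrefl _)
  have himage : univ.filter (fun S : Finset α => S.card = 2) =
      (univ.filter fun p : α × α => p.1 < p.2).image fun p => {p.1, p.2} := by
    ext S
    simp only [mem_filter, mem_univ, true_and, mem_image, card_eq_two]
    constructor
    · rintro ⟨a, b, hab, rfl⟩
      rcases hab.lt_or_gt with h | h
      · exact ⟨(a, b), h, rfl⟩
      · exact ⟨(b, a), h, pair_comm b a⟩
    · rintro ⟨p, hp, rfl⟩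
      exact ⟨p.1, p.2, hp.ne, rfl⟩
  rw [himage, sum_image fun p hp q hq => hinj (by simpa using hp) (by simpa using hq)]

theorem sum_eq_sum_singleton_add_sum_pair {α β : Type*} [Fintype α] [LinearOrder α]
    [AddCommMonoid β] (g : Finset α → β) (h0 : g ∅ = 0)
    (h3 : ∀ S : Finset α, 3 ≤ S.card → g S = 0) :
    ∑ S, g S = ∑ i, g {i} + ∑ p : α × α with p.1 < p.2, g {p.1, p.2} := by
  rw [← sum_filter_card_eq_one, ← sum_filter_card_eq_two, ← sum_union]
  · refine (sum_subset (subset_univ _) fun S _ hS => ?_).symm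
    simp only [mem_union, mem_filter, mem_univ, true_and, not_or] at hS
    rcases Nat.lt_or_ge S.card 3 with h | h
    · rw [card_eq_zero.1 (show S.card = 0 by omega), h0]
    · exact h3 S h
  · exact disjoint_filter.2 fun S _ h1 h2 => by omega

theorem choquetSum_twoAdditive_general {n : ℕ}
    (μ : Finset (Fin n) → ℝ) (hμ0 : μ ∅ = 0)
    (m : Finset (Fin n) → ℝ)
    (hm : ∀ T : Finset (Fin n), μ T = ∑ S ∈ T.powerset, m S)
    (h2add : ∀ T : Finset (Fin n), 3 ≤ T.card → m T = 0)
    (x : Fin n → ℝ)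
    (σ : Equiv.Perm (Fin n)) (hσ : Monotone fun i => x (σ i)) :
    choquetSum μ x σ =
      ∑ i : Fin n, m {i} * x i +
        ∑ p ∈ Finset.univ.filter (fun p : Fin n × Fin n => p.1 < p.2),
          m {p.1, p.2} * min (x p.1) (x p.2) := by
  have hm0 : m ∅ = 0 := by simpa [hμ0] using (hm ∅).symm
  have hμ : μ = fun T => ∑ S, m S * unanimityGame S T :=
    funext fun T => (hm T).trans (sum_powerset_eq_sum_mul_unanimityGame m T)
  rw [hμ, choquetSum_sum_mul, sum_eq_sum_singleton_add_sum_pair _ (by rw [hm0, zero_mul])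
    fun S hS => by rw [h2add S hS, zero_mul]]
  congr 1
  · refine sum_congr rfl fun i _ => ?_
    rw [choquetSum_unanimityGame x σ hσ (singleton_nonempty i), inf'_singleton]
  · refine sum_congr rfl fun p _ => ?_
    rw [choquetSum_unanimityGame x σ hσ (insert_nonempty _ _), inf'_insert (singleton_nonempty _),
      inf'_singleton]

/-- For a 2-additive capacity (its Möbius transform `m` vanishes on sets of
cardinality ≥ 3), the Choquet sum reduces to
`∑ i, m {i} · x i + ∑_{i<j} m {i,j} · min (x i) (x j)`. -/
theorem choquetSum_twoAdditive {n : ℕ} (hn : 1 ≤ n)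
    (μ : Finset (Fin n) → ℝ) (hμ0 : μ ∅ = 0)
    (m : Finset (Fin n) → ℝ)
    (hm : ∀ T : Finset (Fin n), μ T = ∑ S ∈ T.powerset, m S)
    (h2add : ∀ T : Finset (Fin n), 3 ≤ T.card → m T = 0)
    (x : Fin n → ℝ) (hx : ∀ i, 0 ≤ x i)
    (σ : Equiv.Perm (Fin n)) (hσ : Monotone fun i => x (σ i)) :
    choquetSum μ x σ =
      ∑ i : Fin n, m {i} * x i +
        ∑ p ∈ Finset.univ.filter (fun p : Fin n × Fin n => p.1 < p.2),
          m {p.1, p.2} * min (x p.1) (x p.2) :=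
  choquetSum_twoAdditive_general μ hμ0 m hm h2add x σ hσ
end

section
/- Let n ≥ 1 and let μ : Finset (Fin n) → ℝ be a monotone capacity (μ(∅) = 0 and μ(R) ≤ μ(T) whenever R ⊆ T). Let x, y : Fin n → ℝ with 0 ≤ x_i ≤ y_i for all i, let σ be any permutation sorting x nondecreasingly and τ any permutation sorting y nondecreasingly. Then the Choquet sums satisfy S(μ, x, σ) ≤ S(μ, y, τ); i.e., the Choquet integral with respect to a monotone capacity is nondecreasing in each of its arguments. -/
open Finset Set

section IntervalIntegral

variable {f : ℝ → ℝ} {a b c : ℝ}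

theorem intervalIntegrable_of_eqOn_Ioc (hab : a ≤ b) (hf : EqOn f (fun _ => c) (Ioc a b)) :
    IntervalIntegrable f MeasureTheory.volume a b :=
  (intervalIntegrable_congr (uIoc_of_le hab ▸ hf)).mpr intervalIntegrable_const

theorem intervalIntegral_eq_of_eqOn_Ioc (hab : a ≤ b) (hf : EqOn f (fun _ => c) (Ioc a b)) :
    ∫ t in a..b, f t = (b - a) * c := by
  rw [intervalIntegral.integral_congr_Ioo_of_le hab (hf.mono Ioo_subset_Ioc_self),
    intervalIntegral.integral_const, smul_eq_mul]

end IntervalIntegral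

namespace Choquet

variable {n : ℕ} {x : Fin n → ℝ} {σ : Equiv.Perm (Fin n)} {B t : ℝ}

noncomputable def breakpoint (x : Fin n → ℝ) (σ : Equiv.Perm (Fin n)) (B : ℝ) (k : ℕ) : ℝ :=
  if k = 0 then 0 else if h : k - 1 < n then x (σ ⟨k - 1, h⟩) else B

@[simp]
theorem breakpoint_zero : breakpoint x σ B 0 = 0 := rfl

@[simp]
theorem breakpoint_succ (i : Fin n) : breakpoint x σ B (i + 1) = x (σ i) := by
  simp [breakpoint]

theorem breakpoint_of_lt {k : ℕ} (hk : n < k) : breakpoint x σ B k = B := by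
  simp [breakpoint, show k ≠ 0 by omega, show ¬k - 1 < n by omega]

theorem breakpoint_eq (i : Fin n) :
    breakpoint x σ B i =
      if h : (i : ℕ) = 0 then 0 else x (σ ⟨(i : ℕ) - 1, by have := i.isLt; omega⟩) := by
  by_cases h : (i : ℕ) = 0
  · simp [breakpoint, h]
  · simp [breakpoint, h, show (i : ℕ) - 1 < n by omega]

theorem breakpoint_le (hB : ∀ j, x j ≤ B) (hB0 : 0 ≤ B) (k : ℕ) : breakpoint x σ B k ≤ B := by
  unfold breakpoint
  split_ifs
  exacts [hB0, hB _, le_rfl]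

theorem monotone_breakpoint (hx : ∀ j, 0 ≤ x j) (hσ : Monotone fun i => x (σ i))
    (hB : ∀ j, x j ≤ B) (hB0 : 0 ≤ B) : Monotone (breakpoint x σ B) := by
  refine monotone_nat_of_le_succ fun k => ?_
  rcases lt_or_ge k n with hk | hk
  · rw [breakpoint_succ ⟨k, hk⟩]
    rcases k with _ | k
    · exact hx _
    · rw [breakpoint_succ ⟨k, by omega⟩]
      exact hσ (Fin.mk_le_mk.mpr k.le_succ)
  · rw [breakpoint_of_lt (Nat.lt_succ_of_le hk)]
    exact breakpoint_le hB hB0 k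

variable (hbp : Monotone (breakpoint x σ B))
include hbp

theorem le_breakpoint (i : Fin n) {k : ℕ} (hk : (i : ℕ) < k) : x (σ i) ≤ breakpoint x σ B k :=
  (breakpoint_succ (B := B) i).symm.trans_le (hbp hk)

theorem filter_le_eq_of_mem_Ioc (hσ : Monotone fun i => x (σ i)) (i : Fin n)
    (ht : t ∈ Ioc (breakpoint x σ B i) (breakpoint x σ B (i + 1))) :
    univ.filter (fun j => t ≤ x j) = univ.filter (fun j => x (σ i) ≤ x j) := by
  rw [breakpoint_succ] at ht
  ext j
  obtain ⟨k, rfl⟩ := σ.surjective j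
  simp only [mem_filter, Finset.mem_univ, true_and]
  refine ⟨fun htk => ?_, fun hik => ht.2.trans hik⟩
  by_contra hlt
  have hki : k < i := lt_of_not_ge fun hik => hlt (hσ hik)
  linarith [le_breakpoint hbp k hki, ht.1]

theorem filter_le_eq_empty (ht : breakpoint x σ B n < t) :
    univ.filter (fun j => t ≤ x j) = ∅ := by
  refine filter_eq_empty_iff.mpr fun j _ => ?_
  obtain ⟨k, rfl⟩ := σ.surjective j
  exact not_le.mpr ((le_breakpoint hbp k k.isLt).trans_lt ht)

end Choquet

open Choquet in
theorem choquetSum_eq_intervalIntegral {n : ℕ} {μ : Finset (Fin n) → ℝ} (hμ0 : μ ∅ = 0)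
    {x : Fin n → ℝ} {σ : Equiv.Perm (Fin n)} {B : ℝ} (hx : ∀ j, 0 ≤ x j)
    (hσ : Monotone fun i => x (σ i)) (hB : ∀ j, x j ≤ B) (hB0 : 0 ≤ B) :
    choquetSum μ x σ = ∫ t in 0..B, μ (univ.filter fun j => t ≤ x j) := by
  have hbp := monotone_breakpoint hx hσ hB hB0
  have hpiece (i : Fin n) : EqOn (fun t => μ (univ.filter fun j => t ≤ x j))
      (fun _ => μ (univ.filter fun j => x (σ i) ≤ x j))
      (Ioc (breakpoint x σ B i) (breakpoint x σ B (i + 1))) := fun t ht => by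
    simp only [filter_le_eq_of_mem_Ioc hbp hσ i ht]
  have htop : EqOn (fun t => μ (univ.filter fun j => t ≤ x j)) (fun _ => 0)
      (Ioc (breakpoint x σ B n) (breakpoint x σ B (n + 1))) := fun t ht => by
    simp only [filter_le_eq_empty hbp ht.1, hμ0]
  have hint : ∀ k < n + 1, IntervalIntegrable (fun t => μ (univ.filter fun j => t ≤ x j))
      MeasureTheory.volume (breakpoint x σ B k) (breakpoint x σ B (k + 1)) := fun k hk => by
    rcases Nat.lt_succ_iff_lt_or_eq.mp hk with hk | rfl
    · exact intervalIntegrable_of_eqOn_Ioc (hbp k.le_succ) (hpiece ⟨k, hk⟩)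
    · exact intervalIntegrable_of_eqOn_Ioc (hbp k.le_succ) htop
  have hsum := intervalIntegral.sum_integral_adjacent_intervals hint
  rw [breakpoint_zero, breakpoint_of_lt n.lt_succ_self] at hsum
  rw [← hsum, sum_range_succ, intervalIntegral_eq_of_eqOn_Ioc (hbp n.le_succ) htop, mul_zero,
    add_zero, ← Fin.sum_univ_eq_sum_range, choquetSum]
  refine sum_congr rfl fun i _ => ?_
  rw [intervalIntegral_eq_of_eqOn_Ioc (hbp (i : ℕ).le_succ) (hpiece i), breakpoint_succ,
    breakpoint_eq]

theorem choquetSum_monotone_general {n : ℕ}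
    (μ : Finset (Fin n) → ℝ) (hμ0 : μ ∅ = 0)
    (hμmono : ∀ R T : Finset (Fin n), R ⊆ T → μ R ≤ μ T)
    (x y : Fin n → ℝ) (hx : ∀ i, 0 ≤ x i) (hxy : ∀ i, x i ≤ y i)
    (σ τ : Equiv.Perm (Fin n))
    (hσ : Monotone fun i => x (σ i)) (hτ : Monotone fun i => y (τ i)) :
    choquetSum μ x σ ≤ choquetSum μ y τ := by
  have hy : ∀ i, 0 ≤ y i := fun i => (hx i).trans (hxy i)
  set B := ∑ j, y j
  have hyB : ∀ j, y j ≤ B := fun j => single_le_sum (fun i _ => hy i) (mem_univ j)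
  have hB0 : 0 ≤ B := sum_nonneg fun i _ => hy i
  have hμ : Monotone μ := hμmono
  have hlevel (z : Fin n → ℝ) : Antitone fun t => univ.filter fun j => t ≤ z j :=
    fun _ _ hst => monotone_filter_right _ fun _ _ => hst.trans
  rw [choquetSum_eq_intervalIntegral hμ0 hx hσ (fun j => (hxy j).trans (hyB j)) hB0,
    choquetSum_eq_intervalIntegral hμ0 hy hτ hyB hB0]
  exact intervalIntegral.integral_mono_on hB0 (hμ.comp_antitone (hlevel x)).intervalIntegrable
    (hμ.comp_antitone (hlevel y)).intervalIntegrable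
    fun t _ => hμ (monotone_filter_right _ fun j _ htj => htj.trans (hxy j))

/-- The Choquet integral with respect to a monotone capacity is nondecreasing in each
of its arguments: if `0 ≤ x ≤ y` componentwise, then the Choquet sum of `x` (along
any sorting permutation for `x`) is at most that of `y` (along any sorting
permutation for `y`). -/
theorem choquetSum_monotone {n : ℕ} (hn : 1 ≤ n)
    (μ : Finset (Fin n) → ℝ) (hμ0 : μ ∅ = 0)
    (hμmono : ∀ R T : Finset (Fin n), R ⊆ T → μ R ≤ μ T)
    (x y : Fin n → ℝ) (hx : ∀ i, 0 ≤ x i) (hxy : ∀ i, x i ≤ y i)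
    (σ τ : Equiv.Perm (Fin n))
    (hσ : Monotone fun i => x (σ i)) (hτ : Monotone fun i => y (τ i)) :
    choquetSum μ x σ ≤ choquetSum μ y τ :=
  choquetSum_monotone_general μ hμ0 hμmono x y hx hxy σ τ hσ hτ
end
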